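/- Let T be an inverse semigroup and U a right regular T-set. For every u, v ∈ U, ω_{v,u} ω_{u,v} ω_{v,u} = ω_{v,u}; in particular ω_{u,v} is a generalized inverse of ω_{v,u} in the semigroup of maps U → U under composition. -/
import Mathlib


/-- An inverse semigroup: a semigroup in which every element has a unique
generalized inverse `star s`. -/
class InverseSemigroup (S : Type*) extends Semigroup S where
  star : S → S
  mul_star_mul : ∀ s : S, s * star s * s = s
  star_mul_star : ∀ s : S, star s * s * star s = star s
  star_unique : ∀ s t : S, s * t * s = s → t * s * t = t → t = star s

postfix:max "⋆" => InverseSemigroup.star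

/-- A right regular `T`-set over an inverse semigroup `T`. -/
structure RightRegularSet (T : Type*) [InverseSemigroup T] (U : Type*) where
  act : U → T → U
  act_act : ∀ (u : U) (t t' : T), act (act u t) t' = act u (t * t')
  pair : U → U → T
  pair_act : ∀ (u u' : U) (t : T), pair u (act u' t) = pair u u' * t
  pair_star : ∀ u u' : U, (pair u u')⋆ = pair u' u
  act_pair_self : ∀ u : U, act u (pair u u) = u

/-- Condition (R-iv): the right regular `T`-set is a right inverse `T`-set. -/
def RightRegularSet.IsInverse {T : Type*} [InverseSemigroup T] {U : Type*}
    (M : RightRegularSet T U) : Prop :=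
  ∀ u u' : U, M.act u (M.pair u' u) = u → M.act u' (M.pair u u') = u' → u = u'

/-- The rank-one map `ω_{v,u} : U → V`, `ω_{v,u}(u') = v [u, u']`. -/
def omega {T : Type*} [InverseSemigroup T] {U V : Type*}
    (MU : RightRegularSet T U) (MV : RightRegularSet T V) (v : V) (u : U) :
    U → V :=
  fun w => MV.act v (MU.pair u w)

section Aux

variable {S : Type*} [InverseSemigroup S]

lemma iss_star_star (s : S) : s⋆⋆ = s :=
  (InverseSemigroup.star_unique s⋆ s (InverseSemigroup.star_mul_star s)
    (InverseSemigroup.mul_star_mul s)).symm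

lemma iss_star_of_idem {e : S} (he : e * e = e) : e⋆ = e :=
  (InverseSemigroup.star_unique e e (by rw [he, he]) (by rw [he, he])).symm

lemma iss_mul_idem {e f : S} (he : e * e = e) (hf : f * f = f) :
    (e * f) * (e * f) = e * f := by
  set x := (e * f)⋆ with hx
  have he' : ∀ r : S, e * (e * r) = e * r := fun r => by rw [← mul_assoc, he]
  have hf' : ∀ r : S, f * (f * r) = f * r := fun r => by rw [← mul_assoc, hf]
  have h1 : e * f * x * (e * f) = e * f := InverseSemigroup.mul_star_mul _
  have h2 : x * (e * f) * x = x := InverseSemigroup.star_mul_star _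
  have hfxe : f * x * e = x := by
    apply InverseSemigroup.star_unique
    · -- (e*f)*(f*x*e)*(e*f) = e*f
      calc e * f * (f * x * e) * (e * f)
          = e * (f * (f * (x * (e * (e * f))))) := by simp only [mul_assoc]
        _ = e * (f * (x * (e * f))) := by rw [hf', he']
        _ = e * f * x * (e * f) := by simp only [mul_assoc]
        _ = e * f := h1
    · -- (f*x*e)*(e*f)*(f*x*e) = f*x*e
      calc f * x * e * (e * f) * (f * x * e)
          = f * (x * (e * (e * (f * (f * (x * e)))))) := by simp only [mul_assoc]
        _ = f * (x * (e * (f * (x * e)))) := by rw [he', hf']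
        _ = f * (x * (e * f) * x * e) := by simp only [mul_assoc]
        _ = f * (x * e) := by rw [h2]
        _ = f * x * e := by rw [mul_assoc]
  have hxx : x * x = x := by
    conv_lhs => rw [← hfxe]
    calc f * x * e * (f * x * e)
        = f * (x * (e * f) * x * e) := by simp only [mul_assoc]
      _ = f * (x * e) := by rw [h2]
      _ = x := by rw [← mul_assoc, hfxe]
  have hef : e * f = x := by
    rw [← iss_star_of_idem hxx, hx, iss_star_star]
  rw [hef, hxx]

lemma iss_idem_comm {e f : S} (he : e * e = e) (hf : f * f = f) :
    e * f = f * e := by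
  have hef := iss_mul_idem he hf
  have hfe := iss_mul_idem hf he
  have he' : ∀ r : S, e * (e * r) = e * r := fun r => by rw [← mul_assoc, he]
  have hf' : ∀ r : S, f * (f * r) = f * r := fun r => by rw [← mul_assoc, hf]
  have h : f * e = (e * f)⋆ := by
    apply InverseSemigroup.star_unique
    · calc e * f * (f * e) * (e * f)
          = e * (f * (f * (e * (e * f)))) := by simp only [mul_assoc]
        _ = e * (f * (e * f)) := by rw [hf', he']
        _ = (e * f) * (e * f) := by simp only [mul_assoc]
        _ = e * f := hef
    · calc f * e * (e * f) * (f * e)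
          = f * (e * (e * (f * (f * e)))) := by simp only [mul_assoc]
        _ = f * (e * (f * e)) := by rw [he', hf']
        _ = (f * e) * (f * e) := by simp only [mul_assoc]
        _ = f * e := hfe
  rw [h, iss_star_of_idem hef]

lemma iss_mul_star_idem (s : S) : (s * s⋆) * (s * s⋆) = s * s⋆ := by
  calc s * s⋆ * (s * s⋆) = (s * s⋆ * s) * s⋆ := by simp only [mul_assoc]
    _ = s * s⋆ := by rw [InverseSemigroup.mul_star_mul]

lemma iss_star_mul_idem (s : S) : (s⋆ * s) * (s⋆ * s) = s⋆ * s := by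
  calc s⋆ * s * (s⋆ * s) = (s⋆ * s * s⋆) * s := by simp only [mul_assoc]
    _ = s⋆ * s := by rw [InverseSemigroup.star_mul_star]

lemma iss_star_mul (s t : S) : (s * t)⋆ = t⋆ * s⋆ := by
  symm
  apply InverseSemigroup.star_unique
  · calc s * t * (t⋆ * s⋆) * (s * t)
        = s * ((t * t⋆) * (s⋆ * s)) * t := by simp only [mul_assoc]
      _ = s * ((s⋆ * s) * (t * t⋆)) * t := by
          rw [iss_idem_comm (iss_mul_star_idem t) (iss_star_mul_idem s)]
      _ = (s * s⋆ * s) * (t * t⋆ * t) := by simp only [mul_assoc]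
      _ = s * t := by rw [InverseSemigroup.mul_star_mul, InverseSemigroup.mul_star_mul]
  · calc t⋆ * s⋆ * (s * t) * (t⋆ * s⋆)
        = t⋆ * ((s⋆ * s) * (t * t⋆)) * s⋆ := by simp only [mul_assoc]
      _ = t⋆ * ((t * t⋆) * (s⋆ * s)) * s⋆ := by
          rw [iss_idem_comm (iss_star_mul_idem s) (iss_mul_star_idem t)]
      _ = (t⋆ * t * t⋆) * (s⋆ * s * s⋆) := by simp only [mul_assoc]
      _ = t⋆ * s⋆ := by rw [InverseSemigroup.star_mul_star, InverseSemigroup.star_mul_star]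

variable {U : Type*} (M : RightRegularSet S U)

lemma rrs_pair_self_idem (u : U) : M.pair u u * M.pair u u = M.pair u u := by
  rw [← M.pair_act, M.act_pair_self]

lemma rrs_pair_self_mul (u w : U) : M.pair u u * M.pair u w = M.pair u w := by
  have h : M.pair w u * M.pair u u = M.pair w u := by
    rw [← M.pair_act, M.act_pair_self]
  calc M.pair u u * M.pair u w
      = (M.pair u u)⋆ * (M.pair w u)⋆ := by rw [M.pair_star, M.pair_star]
    _ = (M.pair w u * M.pair u u)⋆ := (iss_star_mul _ _).symm
    _ = (M.pair w u)⋆ := by rw [h]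
    _ = M.pair u w := M.pair_star _ _

end Aux

theorem stmt11 {T : Type*} [InverseSemigroup T] {U : Type*}
    (M : RightRegularSet T U) (u v : U) :
    omega M M v u ∘ omega M M u v ∘ omega M M v u = omega M M v u := by
  funext w
  simp only [Function.comp_apply, omega]
  rw [M.pair_act v, M.pair_act u]
  -- goal: act v (pair u u * (pair v v * pair u w)) = act v (pair u w)
  have hcomm : M.pair u u * M.pair v v = M.pair v v * M.pair u u :=
    iss_idem_comm (rrs_pair_self_idem M u) (rrs_pair_self_idem M v)
  calc M.act v (M.pair u u * (M.pair v v * M.pair u w))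
      = M.act v (M.pair v v * (M.pair u u * M.pair u w)) := by
        rw [← mul_assoc, hcomm, mul_assoc]
    _ = M.act v (M.pair v v * M.pair u w) := by rw [rrs_pair_self_mul]
    _ = M.act (M.act v (M.pair v v)) (M.pair u w) := (M.act_act _ _ _).symm
    _ = M.act v (M.pair u w) := by rw [M.act_pair_self]
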